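/- For every m ≥ 1, the number of perfect matchings of [2m] whose flattened form avoids the vincular pattern 21-3 equals 2^{m-1}. -/

import Mathlib

open Finset Polynomial

open scoped Classical

/-- Auxiliary function: walk along the cycles of `π` in standard cycle form order,
starting from `cur`, having already visited `visited`, with `fuel` steps remaining. -/
def flatAux {n : ℕ} (π : Equiv.Perm (Fin n)) : ℕ → Fin n → Finset (Fin n) → List (Fin n)
  | 0, _, _ => []
  | fuel+1, cur, visited =>
    cur ::
      (if π cur ∈ insert cur visited then
        (if h : (Finset.univ \ insert cur visited).Nonempty then
          flatAux π fuel ((Finset.univ \ insert cur visited).min' h) (insert cur visited)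
        else [])
      else flatAux π fuel (π cur) (insert cur visited))

/-- The flattened form of a permutation of `{1,...,n}` (represented on `Fin n`):
write the standard cycle form (each cycle starting with its least element, cycles in
increasing order of least elements), erase parentheses, and read the word with
letters `1,...,n`. -/
def flat {n : ℕ} (π : Equiv.Perm (Fin n)) : List ℕ :=
  if h : 0 < n then (flatAux π n ⟨0, h⟩ ∅).map (fun x => (x : ℕ) + 1) else []

/-- A derangement: a fixed-point-free permutation. -/
def isDerangement {n : ℕ} (π : Equiv.Perm (Fin n)) : Prop := ∀ i, π i ≠ i

/-- Number of (disjoint, nontrivial) cycles of a permutation. -/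
def numCycles {n : ℕ} (π : Equiv.Perm (Fin n)) : ℕ := π.cycleType.card

/-- A word contains the vincular pattern 21-3: positions i < i+1 < j with w_{i+1} < w_i < w_j. -/
def contains21_3 (w : List ℕ) : Prop :=
  ∃ i j : Fin w.length, (i : ℕ) + 1 < (j : ℕ) ∧
    w.getD ((i : ℕ) + 1) 0 < w.getD (i : ℕ) 0 ∧ w.getD (i : ℕ) 0 < w.getD (j : ℕ) 0

def g {n : ℕ} (π : Equiv.Perm (Fin n)) (S : Finset (Fin n)) : List (Fin n) :=
  if h : S.Nonempty then
    S.min' h :: π (S.min' h) :: g π (S \ {S.min' h, π (S.min' h)})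
  else []
termination_by S.card
decreasing_by
  exact Finset.card_lt_card ⟨Finset.sdiff_subset, fun hs => by
    have := hs (S.min'_mem h); simp at this⟩

-- embeddings
def eA (n : ℕ) : Fin n → Fin (n+2) := fun i => ⟨(i:ℕ)+2, by omega⟩
def eB (n : ℕ) : Fin n → Fin (n+2) := fun i => ⟨(i:ℕ)+1, by omega⟩

lemma eA_strictMono (n : ℕ) : StrictMono (eA n) := fun a b h => by
  rw [Fin.lt_def] at h
  simpa only [eA, Fin.mk_lt_mk] using Nat.add_lt_add_right h 2
lemma eB_strictMono (n : ℕ) : StrictMono (eB n) := fun a b h => by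
  rw [Fin.lt_def] at h
  simpa only [eB, Fin.mk_lt_mk] using Nat.add_lt_add_right h 1

lemma min'_univ (n : ℕ) (h : (Finset.univ : Finset (Fin (n+1))).Nonempty) :
    Finset.univ.min' h = 0 := by
  apply le_antisymm (Finset.min'_le _ _ (Finset.mem_univ 0)) (Fin.zero_le _)

lemma flat_length_aux {n : ℕ} (π : Equiv.Perm (Fin n)) :
    ∀ fuel cur vis, (flatAux π fuel cur vis).length ≤ fuel := by
  intro fuel
  induction fuel with
  | zero => intro _ _; simp [flatAux]
  | succ k ih =>
    intro cur vis
    rw [flatAux]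
    simp only [List.length_cons, Nat.add_le_add_iff_right]
    split
    · split
      · exact ih _ _
      · simp
    · exact ih _ _

lemma flatAux_eq_g {n : ℕ} (π : Equiv.Perm (Fin n)) (hπ : ∀ i, π i ≠ i ∧ π (π i) = i) :
    ∀ k (V : Finset (Fin n)) (hV : ∀ x ∈ V, π x ∈ V) (h : Vᶜ.Nonempty), Vᶜ.card = k →
    flatAux π k (Vᶜ.min' h) V = g π Vᶜ := by
  intro k
  induction k using Nat.strong_induction_on with
  | _ k ih =>
  intro V hV h hcard
  set a := Vᶜ.min' h with ha
  have haV : a ∈ Vᶜ := Vᶜ.min'_mem h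
  have haV' : a ∉ V := by simpa using haV
  have hpa : π a ∉ V := fun hmem => by
    have := hV _ hmem
    rw [(hπ a).2] at this
    exact haV' this
  have hpane : π a ≠ a := (hπ a).1
  have hpaC : π a ∈ Vᶜ := by simpa using hpa
  have hk1 : 1 ≤ k := by
    rw [← hcard]; exact Finset.card_pos.mpr h
  -- V2
  set V₂ := insert (π a) (insert a V) with hV₂
  have hV₂c : V₂ᶜ = Vᶜ \ {a, π a} := by
    ext x; simp [hV₂]; tauto
  have hcard2 : V₂ᶜ.card = k - 2 := by
    rw [hV₂c]
    have : Vᶜ \ {a, π a} = (Vᶜ.erase a).erase (π a) := by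
      ext x; simp; tauto
    rw [this, Finset.card_erase_of_mem (Finset.mem_erase.mpr ⟨hpane, hpaC⟩),
      Finset.card_erase_of_mem haV, hcard]
    omega
  have hk2 : 2 ≤ k := by
    rw [← hcard]
    calc 2 = ({a, π a} : Finset (Fin n)).card := (Finset.card_pair (Ne.symm hpane)).symm
    _ ≤ Vᶜ.card := Finset.card_le_card (by
        intro x hx; simp at hx; rcases hx with rfl | rfl
        · exact haV
        · exact hpaC)
  obtain ⟨k'', rfl⟩ : ∃ k'', k = k'' + 2 := ⟨k - 2, by omega⟩
  -- unfold flatAux twice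
  have hnotmem : π a ∉ insert a V := by simp [hpane, hpa]
  rw [show k'' + 2 = (k'' + 1) + 1 from rfl]
  rw [flatAux, if_neg hnotmem, flatAux]
  have hmem2 : π (π a) ∈ insert (π a) (insert a V) := by
    rw [(hπ a).2]; simp
  rw [if_pos hmem2]
  have huniv : Finset.univ \ insert (π a) (insert a V) = V₂ᶜ := by
    rw [hV₂]; exact (Finset.compl_eq_univ_sdiff _).symm
  rw [g, dif_pos h, ← ha]
  by_cases h2 : V₂ᶜ.Nonempty
  · rw [dif_pos (huniv ▸ h2)]
    have := ih k'' (by omega) V₂ (by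
      intro x hx
      simp [hV₂] at hx ⊢
      rcases hx with rfl | rfl | hx
      · right; left; exact (hπ a).2
      · left; rfl
      · right; right; exact hV x hx) (huniv ▸ h2) (by omega)
    simp_rw [huniv]
    rw [this, hV₂c]
  · rw [dif_neg (by rw [huniv]; exact h2)]
    rw [g, dif_neg (by rw [hV₂c] at h2; exact h2)]

lemma mem_g {n : ℕ} (π : Equiv.Perm (Fin n)) (hπ : ∀ i, π (π i) = i) :
    ∀ (S : Finset (Fin n)), (∀ x ∈ S, π x ∈ S) → ∀ x, (x ∈ g π S ↔ x ∈ S) := by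
  intro S
  induction S using Finset.strongInduction with
  | _ S ih =>
  intro hS x
  rw [g]
  by_cases h : S.Nonempty
  · rw [dif_pos h]
    set a := S.min' h with ha
    have haS := S.min'_mem h
    have hpaS : π a ∈ S := hS _ haS
    have hsub : S \ {a, π a} ⊂ S := ⟨Finset.sdiff_subset, fun hs => by
      have := hs haS; simp at this; exact this.2.1 ha.symm⟩
    rw [List.mem_cons, List.mem_cons,
      ih _ hsub (fun y hy => by
        simp only [Finset.mem_sdiff, Finset.mem_insert, Finset.mem_singleton] at hy ⊢
        push_neg at hy ⊢
        exact ⟨hS y hy.1, fun hc => hy.2.2 (by rw [← hπ y, hc]),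
          fun hc => hy.2.1 (π.injective hc)⟩)]
    simp only [Finset.mem_sdiff, Finset.mem_insert, Finset.mem_singleton]
    constructor
    · rintro (rfl | rfl | ⟨hx, _⟩) <;> assumption
    · intro hx
      by_cases h1 : x = a
      · left; exact h1
      by_cases h2 : x = π a
      · right; left; exact h2
      · right; right; exact ⟨hx, by tauto⟩
  · rw [dif_neg h]
    simp [Finset.not_nonempty_iff_eq_empty.mp h]

lemma g_map {n k : ℕ} (π : Equiv.Perm (Fin n)) (π' : Equiv.Perm (Fin k))
    (e : Fin k → Fin n) (he : StrictMono e)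
    (hcomm : ∀ i, π (e i) = e (π' i)) :
    ∀ (T : Finset (Fin k)), g π (T.image e) = (g π' T).map e := by
  intro T
  induction T using Finset.strongInduction with
  | _ T ih =>
  rw [g, g]
  by_cases h : T.Nonempty
  · have himg : (T.image e).Nonempty := h.image e
    rw [dif_pos himg, dif_pos h]
    have hmin : (T.image e).min' himg = e (T.min' h) := by
      apply le_antisymm
      · exact Finset.min'_le _ _ (Finset.mem_image_of_mem e (T.min'_mem h))
      · obtain ⟨y, hy, hye⟩ := Finset.mem_image.mp ((T.image e).min'_mem himg)
        rw [← hye]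
        exact he.monotone (Finset.min'_le _ _ hy)
    have hsub : T \ {T.min' h, π' (T.min' h)} ⊂ T := ⟨Finset.sdiff_subset, fun hs => by
      have := hs (T.min'_mem h); simp at this⟩
    have himgsd : (T.image e) \ {(T.image e).min' himg, π ((T.image e).min' himg)}
        = (T \ {T.min' h, π' (T.min' h)}).image e := by
      rw [hmin, hcomm]
      rw [Finset.image_sdiff _ _ he.injective]
      congr 1
      simp [Finset.image_insert]
    rw [himgsd, ih _ hsub, hmin, hcomm]
    simp
  · rw [dif_neg h, dif_neg (by simpa using h)]
    rfl

lemma getD_cc (a b : ℕ) (t : List ℕ) (k : ℕ) : (a :: b :: t).getD (k+2) 0 = t.getD k 0 := rfl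
lemma getD_c0 (a : ℕ) (t : List ℕ) : (a :: t).getD 0 0 = a := rfl
lemma getD_c1 (a b : ℕ) (t : List ℕ) : (a :: b :: t).getD 1 0 = b := rfl

lemma contains_iff (w : List ℕ) : contains21_3 w ↔ ∃ i j : ℕ, i + 1 < j ∧ j < w.length ∧
    w.getD (i + 1) 0 < w.getD i 0 ∧ w.getD i 0 < w.getD j 0 := by
  constructor
  · rintro ⟨i, j, h1, h2, h3⟩
    exact ⟨i, j, h1, j.isLt, h2, h3⟩
  · rintro ⟨i, j, h1, h2, h3, h4⟩
    exact ⟨⟨i, by omega⟩, ⟨j, h2⟩, h1, h3, h4⟩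

lemma not_contains_short (w : List ℕ) (h : w.length ≤ 2) : ¬ contains21_3 w := by
  rw [contains_iff]
  rintro ⟨i, j, h1, h2, -⟩
  omega

lemma getD_mem (t : List ℕ) (k : ℕ) (hk : k < t.length) : t.getD k 0 ∈ t := by
  rw [List.getD_eq_getElem _ _ hk]; exact List.getElem_mem _

lemma contains_shift (a b : ℕ) (t : List ℕ) (hab : a < b) (hbt : ∀ x ∈ t, b < x) :
    contains21_3 (a :: b :: t) ↔ contains21_3 t := by
  rw [contains_iff, contains_iff]
  constructor
  · rintro ⟨i, j, h1, h2, h3, h4⟩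
    simp only [List.length_cons] at h2
    match i, h1 with
    | 0, _ => rw [getD_c1, getD_c0] at h3; omega
    | 1, _ =>
      exfalso
      rw [show (1:ℕ)+1 = 0+2 from rfl, getD_cc, getD_c1] at h3
      have := hbt _ (getD_mem t 0 (by omega))
      omega
    | (k+2), _ =>
      refine ⟨k, j - 2, by omega, by omega, ?_, ?_⟩
      · rw [show k+2+1 = (k+1)+2 from rfl, getD_cc, getD_cc] at h3; exact h3
      · rw [show j = (j - 2) + 2 from by omega, getD_cc, getD_cc] at h4; exact h4
  · rintro ⟨i, j, h1, h2, h3, h4⟩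
    refine ⟨i + 2, j + 2, by omega, by simp; omega, ?_, ?_⟩
    · rw [show i+2+1 = (i+1)+2 from rfl, getD_cc, getD_cc]; exact h3
    · rw [getD_cc, getD_cc]; exact h4

lemma contains_cap (a b : ℕ) (t : List ℕ) (hab : a < b) (hbt : ∀ x ∈ t, x < b) :
    contains21_3 (a :: b :: t) ↔ contains21_3 t := by
  rw [contains_iff, contains_iff]
  constructor
  · rintro ⟨i, j, h1, h2, h3, h4⟩
    simp only [List.length_cons] at h2
    match i, h1 with
    | 0, _ => rw [getD_c1, getD_c0] at h3; omega
    | 1, _ =>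
      exfalso
      rw [show j = (j - 2) + 2 from by omega, getD_cc, getD_c1] at h4
      have := hbt _ (getD_mem t (j-2) (by omega))
      omega
    | (k+2), _ =>
      refine ⟨k, j - 2, by omega, by omega, ?_, ?_⟩
      · rw [show k+2+1 = (k+1)+2 from rfl, getD_cc, getD_cc] at h3; exact h3
      · rw [show j = (j - 2) + 2 from by omega, getD_cc, getD_cc] at h4; exact h4
  · rintro ⟨i, j, h1, h2, h3, h4⟩
    refine ⟨i + 2, j + 2, by omega, by simp; omega, ?_, ?_⟩
    · rw [show i+2+1 = (i+1)+2 from rfl, getD_cc, getD_cc]; exact h3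
    · rw [getD_cc, getD_cc]; exact h4

lemma contains_map (f : ℕ → ℕ) (hf : StrictMono f) (w : List ℕ) :
    contains21_3 (w.map f) ↔ contains21_3 w := by
  rw [contains_iff, contains_iff]
  have hget : ∀ k, k < w.length → (w.map f).getD k 0 = f (w.getD k 0) := by
    intro k hk
    rw [List.getD_eq_getElem _ _ (by simpa using hk), List.getD_eq_getElem _ _ hk,
      List.getElem_map]
  simp only [List.length_map]
  constructor
  · rintro ⟨i, j, h1, h2, h3, h4⟩
    rw [hget (i+1) (by omega), hget i (by omega)] at h3
    rw [hget i (by omega), hget j h2] at h4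
    exact ⟨i, j, h1, h2, hf.lt_iff_lt.mp h3, hf.lt_iff_lt.mp h4⟩
  · rintro ⟨i, j, h1, h2, h3, h4⟩
    refine ⟨i, j, h1, h2, ?_, ?_⟩
    · rw [hget (i+1) (by omega), hget i (by omega)]; exact hf h3
    · rw [hget i (by omega), hget j h2]; exact hf h4


lemma coe_list_eq {n : ℕ} (l : List (Fin n)) : (l : List ℕ) = l.map Fin.val := by
  simp only [List.pure_def, List.bind_eq_flatMap]
  induction l with
  | nil => rfl
  | cons a t ih => simp [List.flatMap_cons, ih]

lemma flat_eq {n : ℕ} (π : Equiv.Perm (Fin n)) (hπ : ∀ i, π i ≠ i ∧ π (π i) = i)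
    (hn : 0 < n) : flat π = (g π Finset.univ).map (fun x : Fin n => (x : ℕ) + 1) := by
  have hne : ((∅ : Finset (Fin n))ᶜ).Nonempty := by
    rw [Finset.compl_empty]
    exact ⟨⟨0, hn⟩, Finset.mem_univ _⟩
  have h := flatAux_eq_g π hπ n ∅ (by simp) hne (by simp [Finset.compl_empty])
  rw [flat, dif_pos hn]
  have hmin : ((∅ : Finset (Fin n))ᶜ).min' hne = ⟨0, hn⟩ := by
    apply le_antisymm
    · exact Finset.min'_le _ _ (by simp)
    · exact Fin.mk_le_of_le_val (Nat.zero_le _)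
  rw [← hmin, h, Finset.compl_empty, coe_list_eq, List.map_map]
  rfl

lemma flat_bounds {n : ℕ} (π : Equiv.Perm (Fin n)) : ∀ x ∈ flat π, 1 ≤ x ∧ x ≤ n := by
  intro x hx
  rw [flat] at hx
  split at hx
  · rw [coe_list_eq, List.map_map] at hx
    obtain ⟨v, -, rfl⟩ := List.mem_map.mp hx
    have := v.2
    simp only [Function.comp]
    omega
  · simp at hx

lemma flatA {n : ℕ} (hn : 0 < n) (π : Equiv.Perm (Fin (n+2))) (π' : Equiv.Perm (Fin n))
    (hπ : ∀ i, π i ≠ i ∧ π (π i) = i) (hπ' : ∀ i, π' i ≠ i ∧ π' (π' i) = i)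
    (h0 : π 0 = 1) (hcomm : ∀ i, π (eA n i) = eA n (π' i)) :
    flat π = 1 :: 2 :: (flat π').map (fun x => x + 2) := by
  rw [flat_eq π hπ (by omega), flat_eq π' hπ' hn]
  have hu : (Finset.univ : Finset (Fin (n+2))).Nonempty := ⟨0, Finset.mem_univ _⟩
  rw [g, dif_pos hu, min'_univ _ hu, h0]
  have himg : (Finset.univ : Finset (Fin (n+2))) \ {0, 1} = Finset.univ.image (eA n) := by
    ext x
    simp only [Finset.mem_sdiff, Finset.mem_univ, Finset.mem_insert, Finset.mem_singleton,
      Finset.mem_image, true_and, exists_true_left]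
    constructor
    · intro hx
      push_neg at hx
      have hv0 : (x : ℕ) ≠ 0 := fun hc => hx.1 (Fin.ext (by simpa using hc))
      have hv1 : (x : ℕ) ≠ 1 := fun hc => hx.2 (Fin.ext (by simpa using hc))
      exact ⟨⟨(x : ℕ) - 2, by omega⟩, Fin.ext (by simp [eA]; omega)⟩
    · rintro ⟨i, rfl⟩
      rintro (hc | hc) <;>
        · have := congrArg Fin.val hc; simp [eA] at this
  rw [himg, g_map π π' (eA n) (eA_strictMono n) hcomm Finset.univ]
  simp only [List.map_cons, List.map_map, List.cons.injEq, Function.comp]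
  refine ⟨by simp, by simp [Fin.val_one], ?_⟩
  apply List.map_congr_left
  intro x hx
  simp [eA, eB]

lemma flatB {n : ℕ} (hn : 0 < n) (π : Equiv.Perm (Fin (n+2))) (π' : Equiv.Perm (Fin n))
    (hπ : ∀ i, π i ≠ i ∧ π (π i) = i) (hπ' : ∀ i, π' i ≠ i ∧ π' (π' i) = i)
    (h0 : π 0 = ⟨n+1, by omega⟩) (hcomm : ∀ i, π (eB n i) = eB n (π' i)) :
    flat π = 1 :: (n+2) :: (flat π').map (fun x => x + 1) := by
  rw [flat_eq π hπ (by omega), flat_eq π' hπ' hn]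
  have hu : (Finset.univ : Finset (Fin (n+2))).Nonempty := ⟨0, Finset.mem_univ _⟩
  rw [g, dif_pos hu, min'_univ _ hu, h0]
  have himg : (Finset.univ : Finset (Fin (n+2))) \ {0, ⟨n+1, by omega⟩}
      = Finset.univ.image (eB n) := by
    ext x
    simp only [Finset.mem_sdiff, Finset.mem_univ, Finset.mem_insert, Finset.mem_singleton,
      Finset.mem_image, true_and, exists_true_left]
    constructor
    · intro hx
      push_neg at hx
      have hv0 : (x : ℕ) ≠ 0 := fun hc => hx.1 (Fin.ext (by simpa using hc))
      have hv1 : (x : ℕ) ≠ n+1 := fun hc => hx.2 (Fin.ext (by simpa using hc))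
      have := x.isLt
      exact ⟨⟨(x : ℕ) - 1, by omega⟩, Fin.ext (by simp [eB]; omega)⟩
    · rintro ⟨i, rfl⟩
      have hilt := i.isLt
      rintro (hc | hc)
      · have := congrArg Fin.val hc; simp [eB] at this
      · have := congrArg Fin.val hc; simp [eB] at this; omega
  rw [himg, g_map π π' (eB n) (eB_strictMono n) hcomm Finset.univ]
  simp only [List.map_cons, List.map_map, List.cons.injEq, Function.comp]
  refine ⟨by simp, by simp [Fin.val_one], ?_⟩
  apply List.map_congr_left
  intro x hx
  simp [eA, eB]

lemma getD_cs (a : ℕ) (t : List ℕ) (k : ℕ) : (a :: t).getD (k+1) 0 = t.getD k 0 := rfl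

lemma caseC {n : ℕ} (hn : 0 < n) (π : Equiv.Perm (Fin (n+2)))
    (hπ : ∀ i, π i ≠ i ∧ π (π i) = i) (h1 : π 0 ≠ 1) (h2 : π 0 ≠ ⟨n+1, by omega⟩) :
    contains21_3 (flat π) := by
  set c := π 0 with hc
  have hc0 : c ≠ 0 := (hπ 0).1
  have hcv : 2 ≤ (c : ℕ) := by
    have v0 : (c : ℕ) ≠ 0 := fun h => hc0 (Fin.ext (by simpa using h))
    have v1 : (c : ℕ) ≠ 1 := fun h => h1 (Fin.ext (by simpa using h))
    omega
  have hcn : (c : ℕ) ≤ n := by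
    have hlt := c.isLt
    have vn : (c : ℕ) ≠ n+1 := fun h => h2 (Fin.ext (by simpa using h))
    omega
  rw [flat_eq π hπ (by omega)]
  have hu : (Finset.univ : Finset (Fin (n+2))).Nonempty := ⟨0, Finset.mem_univ _⟩
  rw [g, dif_pos hu, min'_univ _ hu, ← hc]
  set S : Finset (Fin (n+2)) := Finset.univ \ {0, c} with hS
  have h1ne0 : (1 : Fin (n+2)) ≠ 0 := by
    intro h; have := congrArg Fin.val h; simp at this
  have h1S : (1 : Fin (n+2)) ∈ S := by
    simp only [hS, Finset.mem_sdiff, Finset.mem_univ, Finset.mem_insert,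
      Finset.mem_singleton, true_and]
    push_neg
    exact ⟨h1ne0, fun h => h1 h.symm⟩
  have hSne : S.Nonempty := ⟨1, h1S⟩
  have hminS : S.min' hSne = 1 := by
    apply le_antisymm (Finset.min'_le _ _ h1S)
    have hmem := S.min'_mem hSne
    have : S.min' hSne ≠ 0 := by
      intro h; rw [h] at hmem
      simp [hS] at hmem
    have hne := Fin.val_ne_of_ne this
    simp only [Fin.val_zero] at hne
    rw [Fin.le_def, Fin.val_one]
    omega
  have hSinv : ∀ x ∈ S, π x ∈ S := by
    intro x hx
    simp only [hS, Finset.mem_sdiff, Finset.mem_univ, Finset.mem_insert,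
      Finset.mem_singleton, true_and] at hx ⊢
    push_neg at hx ⊢
    constructor
    · intro h
      apply hx.2
      have hxx := (hπ x).2
      rw [h] at hxx
      exact (hc.trans hxx).symm
    · intro h
      apply hx.1
      have hxx := (hπ x).2
      rw [h] at hxx
      have h0 : π c = 0 := by rw [hc]; exact (hπ 0).2
      rw [← hxx, h0]
  have hlast : (⟨n+1, by omega⟩ : Fin (n+2)) ∈ S := by
    simp only [hS, Finset.mem_sdiff, Finset.mem_univ, Finset.mem_insert,
      Finset.mem_singleton, true_and]
    push_neg
    constructor
    · intro h; have := congrArg Fin.val h; simp at this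
    · intro h; exact h2 h.symm
  have hlastg : (⟨n+1, by omega⟩ : Fin (n+2)) ∈ g π S :=
    (mem_g π (fun i => (hπ i).2) S hSinv _).mpr hlast
  rw [g, dif_pos hSne, hminS] at hlastg ⊢
  have hlast1 : (⟨n+1, by omega⟩ : Fin (n+2)) ≠ 1 := by
    intro h; have := congrArg Fin.val h; simp [Fin.val_one] at this; omega
  rw [List.mem_cons] at hlastg
  rcases hlastg with h | hlastg
  · exact absurd h hlast1
  -- now the word
  set rest := π 1 :: g π (S \ {1, π 1}) with hrest
  set u := rest.map (fun x : Fin (n+2) => (x : ℕ) + 1) with hu2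
  have hmemu : (n + 2) ∈ u := by
    rw [hu2]
    exact List.mem_map.mpr ⟨_, hlastg, by simp⟩
  obtain ⟨k, hk, hval⟩ := List.mem_iff_getElem.mp hmemu
  rw [contains_iff]
  simp only [List.map_cons]
  refine ⟨1, 3 + k, by omega, ?_, ?_, ?_⟩
  · simp only [List.length_cons, List.length_map]
    rw [hu2] at hk
    simp only [List.length_map] at hk
    omega
  · rw [getD_c1, show (1:ℕ)+1 = 0+2 from rfl, getD_cc, getD_c0]
    simp only [Fin.val_one]
    omega
  · rw [getD_c1, show 3 + k = (k+1)+2 from by omega, getD_cc, getD_cs]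
    have hgu : u.getD k 0 = n + 2 := by
      rw [List.getD_eq_getElem _ _ (by rw [hu2] at hk ⊢; simpa using hk)]
      exact hval
    rw [hu2] at hgu
    rw [hgu]
    omega

-- extension in case A
def fA {n : ℕ} (π' : Equiv.Perm (Fin n)) : Fin (n+2) → Fin (n+2) := fun j =>
  if h : (j : ℕ) < 2 then ⟨1 - (j : ℕ), by omega⟩
  else ⟨(π' ⟨(j : ℕ) - 2, by have := j.isLt; omega⟩ : ℕ) + 2,
    by have := (π' ⟨(j : ℕ) - 2, by have := j.isLt; omega⟩).isLt; omega⟩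

def fB {n : ℕ} (π' : Equiv.Perm (Fin n)) : Fin (n+2) → Fin (n+2) := fun j =>
  if h0 : (j : ℕ) = 0 then ⟨n+1, by omega⟩
  else if h : (j : ℕ) = n+1 then ⟨0, by omega⟩
  else ⟨(π' ⟨(j : ℕ) - 1, by have := j.isLt; omega⟩ : ℕ) + 1,
    by have := (π' ⟨(j : ℕ) - 1, by have := j.isLt; omega⟩).isLt; omega⟩

-- restrictions (raw functions)
def resA {n : ℕ} (π : Equiv.Perm (Fin (n+2))) : Fin n → Fin n := fun i =>
  ⟨min ((π (eA n i) : ℕ) - 2) (n-1), by have h2 : (i : ℕ) < n := i.isLt; omega⟩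

def resB {n : ℕ} (π : Equiv.Perm (Fin (n+2))) : Fin n → Fin n := fun i =>
  ⟨min ((π (eB n i) : ℕ) - 1) (n-1), by have h2 : (i : ℕ) < n := i.isLt; omega⟩

lemma fA_invol {n : ℕ} (π' : Equiv.Perm (Fin n)) (hinv : ∀ i, π' (π' i) = i) :
    Function.Involutive (fA π') := by
  intro j
  by_cases h : (j : ℕ) < 2
  · rw [fA, fA]
    simp only [dif_pos h]
    rw [dif_pos (show 1 - (j:ℕ) < 2 by omega)]
    exact Fin.ext (by simp; omega)
  · rw [fA, fA]
    simp only [dif_neg h]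
    rw [dif_neg (show ¬ ((π' ⟨(j:ℕ)-2, by have := j.isLt; omega⟩ : ℕ) + 2 < 2) by omega)]
    apply Fin.ext
    simp only [Nat.add_sub_cancel, Fin.eta]
    rw [hinv]
    have := j.isLt
    simp
    omega

lemma fA_zero {n : ℕ} (π' : Equiv.Perm (Fin n)) : fA π' 0 = 1 := by
  rw [fA]
  rw [dif_pos (by simp)]
  exact Fin.ext (by simp)

lemma fA_comm {n : ℕ} (π' : Equiv.Perm (Fin n)) (i : Fin n) :
    fA π' (eA n i) = eA n (π' i) := by
  rw [fA]
  rw [dif_neg (by simp [eA])]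
  apply Fin.ext
  simp only [eA]
  congr 2

lemma fA_fpf {n : ℕ} (π' : Equiv.Perm (Fin n)) (hfpf : ∀ i, π' i ≠ i) (j : Fin (n+2)) :
    fA π' j ≠ j := by
  intro hc
  have hv := congrArg Fin.val hc
  rw [fA] at hv
  by_cases h : (j : ℕ) < 2
  · rw [dif_pos h] at hv
    simp at hv
    omega
  · rw [dif_neg h] at hv
    simp at hv
    apply hfpf ⟨(j:ℕ)-2, by have := j.isLt; omega⟩
    apply Fin.ext
    simp
    omega

lemma fB_last {n : ℕ} (π' : Equiv.Perm (Fin n)) : fB π' ⟨n+1, by omega⟩ = 0 := by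
  rw [fB]
  rw [dif_neg (show ¬ ((⟨n+1, by omega⟩ : Fin (n+2)) : ℕ) = 0 by simp),
    dif_pos (show ((⟨n+1, by omega⟩ : Fin (n+2)) : ℕ) = n+1 by simp)]
  exact Fin.ext (by simp)

lemma fB_invol {n : ℕ} (π' : Equiv.Perm (Fin n)) (hinv : ∀ i, π' (π' i) = i) :
    Function.Involutive (fB π') := by
  intro j
  have hjlt := j.isLt
  by_cases h0 : (j : ℕ) = 0
  · have hj : j = 0 := Fin.ext (by simpa using h0)
    have hz : fB π' 0 = ⟨n+1, by omega⟩ := by rw [fB]; rw [dif_pos (by simp)]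
    rw [hj, hz, fB_last]
  · by_cases h1 : (j : ℕ) = n+1
    · have hj : j = ⟨n+1, by omega⟩ := Fin.ext (by simpa using h1)
      have hz : fB π' 0 = ⟨n+1, by omega⟩ := by rw [fB]; rw [dif_pos (by simp)]
      rw [hj, fB_last, hz]
    · rw [fB, fB]
      simp only [dif_neg h0, dif_neg h1]
      have hlt := (π' ⟨(j:ℕ)-1, by omega⟩).isLt
      rw [dif_neg (show ¬ ((π' ⟨(j:ℕ)-1, by omega⟩ : ℕ) + 1 = 0) by omega),
        dif_neg (show ¬ ((π' ⟨(j:ℕ)-1, by omega⟩ : ℕ) + 1 = n+1) by omega)]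
      apply Fin.ext
      simp only [Nat.add_sub_cancel, Fin.eta]
      rw [hinv]
      simp
      omega

lemma fB_zero {n : ℕ} (π' : Equiv.Perm (Fin n)) : fB π' 0 = ⟨n+1, by omega⟩ := by
  rw [fB]
  rw [dif_pos (by simp)]

lemma fB_comm {n : ℕ} (π' : Equiv.Perm (Fin n)) (i : Fin n) :
    fB π' (eB n i) = eB n (π' i) := by
  have := i.isLt
  rw [fB]
  rw [dif_neg (by simp [eB]), dif_neg (by simp [eB]; omega)]
  apply Fin.ext
  simp only [eB]
  congr 2

lemma fB_fpf {n : ℕ} (π' : Equiv.Perm (Fin n)) (hfpf : ∀ i, π' i ≠ i) (j : Fin (n+2)) :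
    fB π' j ≠ j := by
  intro hc
  have hjlt := j.isLt
  have hv := congrArg Fin.val hc
  rw [fB] at hv
  by_cases h0 : (j : ℕ) = 0
  · rw [dif_pos h0] at hv
    simp at hv
    omega
  · by_cases h1 : (j : ℕ) = n+1
    · rw [dif_neg h0, dif_pos h1] at hv
      simp at hv
      omega
    · rw [dif_neg h0, dif_neg h1] at hv
      simp at hv
      apply hfpf ⟨(j:ℕ)-1, by omega⟩
      apply Fin.ext
      simp
      omega

lemma pi_one {n : ℕ} (π : Equiv.Perm (Fin (n+2))) (hinv : ∀ i, π (π i) = i)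
    (h0 : π 0 = 1) : π 1 = 0 := by
  have := hinv 0
  rwa [h0] at this

lemma resA_comm {n : ℕ} (π : Equiv.Perm (Fin (n+2))) (hinv : ∀ i, π (π i) = i)
    (h0 : π 0 = 1) (i : Fin n) : π (eA n i) = eA n (resA π i) := by
  have hilt := i.isLt
  have hne0 : eA n i ≠ 0 := by
    intro h; have := congrArg Fin.val h; simp [eA] at this
  have hne1 : eA n i ≠ 1 := by
    intro h; have := congrArg Fin.val h; simp [eA, Fin.val_one] at this
  have hv1 : π (eA n i) ≠ 1 := by
    intro h; rw [← h0] at h; exact hne0 (π.injective h)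
  have hv0 : π (eA n i) ≠ 0 := by
    intro h; rw [← pi_one π hinv h0] at h; exact hne1 (π.injective h)
  have hvlt := (π (eA n i)).isLt
  have hval0 : (π (eA n i) : ℕ) ≠ 0 := fun h => hv0 (Fin.ext (by simpa using h))
  have hval1 : (π (eA n i) : ℕ) ≠ 1 := fun h => hv1 (Fin.ext (by simpa [Fin.val_one] using h))
  apply Fin.ext
  show (π (eA n i) : ℕ) = ((eA n (resA π i)) : ℕ)
  rw [show ((eA n (resA π i)) : ℕ) = (resA π i : ℕ) + 2 from rfl,
    show (resA π i : ℕ) = min ((π (eA n i) : ℕ) - 2) (n-1) from rfl]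
  omega

lemma resA_invol {n : ℕ} (π : Equiv.Perm (Fin (n+2))) (hinv : ∀ i, π (π i) = i)
    (h0 : π 0 = 1) : Function.Involutive (resA π) := by
  intro i
  have h1 := resA_comm π hinv h0 i
  have h2 := resA_comm π hinv h0 (resA π i)
  rw [← h1, hinv] at h2
  exact (eA_strictMono n).injective h2.symm

lemma resA_fpf {n : ℕ} (π : Equiv.Perm (Fin (n+2))) (hinv : ∀ i, π (π i) = i)
    (h0 : π 0 = 1) (hfpf : ∀ i, π i ≠ i) (i : Fin n) : resA π i ≠ i := by
  intro hc
  apply hfpf (eA n i)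
  rw [resA_comm π hinv h0 i, hc]

lemma pi_last {n : ℕ} (π : Equiv.Perm (Fin (n+2))) (hinv : ∀ i, π (π i) = i)
    (h0 : π 0 = ⟨n+1, by omega⟩) : π ⟨n+1, by omega⟩ = 0 := by
  have := hinv 0
  rwa [h0] at this

lemma resB_comm {n : ℕ} (π : Equiv.Perm (Fin (n+2))) (hinv : ∀ i, π (π i) = i)
    (h0 : π 0 = ⟨n+1, by omega⟩) (i : Fin n) : π (eB n i) = eB n (resB π i) := by
  have hilt := i.isLt
  have hne0 : eB n i ≠ 0 := by
    intro h; have := congrArg Fin.val h; simp [eB] at this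
  have hne1 : eB n i ≠ ⟨n+1, by omega⟩ := by
    intro h; have := congrArg Fin.val h; simp [eB] at this; omega
  have hv1 : π (eB n i) ≠ ⟨n+1, by omega⟩ := by
    intro h; rw [← h0] at h; exact hne0 (π.injective h)
  have hv0 : π (eB n i) ≠ 0 := by
    intro h; rw [← pi_last π hinv h0] at h; exact hne1 (π.injective h)
  have hvlt := (π (eB n i)).isLt
  have hval0 : (π (eB n i) : ℕ) ≠ 0 := fun h => hv0 (Fin.ext (by simpa using h))
  have hval1 : (π (eB n i) : ℕ) ≠ n+1 := fun h => hv1 (Fin.ext (by simpa using h))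
  apply Fin.ext
  show (π (eB n i) : ℕ) = ((eB n (resB π i)) : ℕ)
  rw [show ((eB n (resB π i)) : ℕ) = (resB π i : ℕ) + 1 from rfl,
    show (resB π i : ℕ) = min ((π (eB n i) : ℕ) - 1) (n-1) from rfl]
  omega

lemma resB_invol {n : ℕ} (π : Equiv.Perm (Fin (n+2))) (hinv : ∀ i, π (π i) = i)
    (h0 : π 0 = ⟨n+1, by omega⟩) : Function.Involutive (resB π) := by
  intro i
  have h1 := resB_comm π hinv h0 i
  have h2 := resB_comm π hinv h0 (resB π i)
  rw [← h1, hinv] at h2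
  exact (eB_strictMono n).injective h2.symm

lemma resB_fpf {n : ℕ} (π : Equiv.Perm (Fin (n+2))) (hinv : ∀ i, π (π i) = i)
    (h0 : π 0 = ⟨n+1, by omega⟩) (hfpf : ∀ i, π i ≠ i) (i : Fin n) : resB π i ≠ i := by
  intro hc
  apply hfpf (eB n i)
  rw [resB_comm π hinv h0 i, hc]

lemma avoidA_iff {n : ℕ} (hn : 0 < n) (π : Equiv.Perm (Fin (n+2))) (π' : Equiv.Perm (Fin n))
    (hπ : ∀ i, π i ≠ i ∧ π (π i) = i) (hπ' : ∀ i, π' i ≠ i ∧ π' (π' i) = i)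
    (h0 : π 0 = 1) (hcomm : ∀ i, π (eA n i) = eA n (π' i)) :
    contains21_3 (flat π) ↔ contains21_3 (flat π') := by
  rw [flatA hn π π' hπ hπ' h0 hcomm]
  rw [contains_shift 1 2 _ (by norm_num) (by
    intro x hx
    obtain ⟨y, hy, rfl⟩ := List.mem_map.mp hx
    have := (flat_bounds π' y hy).1
    omega)]
  exact contains_map _ (fun a b h => by omega) _

lemma avoidB_iff {n : ℕ} (hn : 0 < n) (π : Equiv.Perm (Fin (n+2))) (π' : Equiv.Perm (Fin n))
    (hπ : ∀ i, π i ≠ i ∧ π (π i) = i) (hπ' : ∀ i, π' i ≠ i ∧ π' (π' i) = i)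
    (h0 : π 0 = ⟨n+1, by omega⟩) (hcomm : ∀ i, π (eB n i) = eB n (π' i)) :
    contains21_3 (flat π) ↔ contains21_3 (flat π') := by
  rw [flatB hn π π' hπ hπ' h0 hcomm]
  rw [contains_cap 1 (n+2) _ (by omega) (by
    intro x hx
    obtain ⟨y, hy, rfl⟩ := List.mem_map.mp hx
    have := (flat_bounds π' y hy).2
    omega)]
  exact contains_map _ (fun a b h => by omega) _

lemma fA_eq {n : ℕ} (π : Equiv.Perm (Fin (n+2))) (hinv : ∀ i, π (π i) = i)
    (h0 : π 0 = 1) (π'' : Equiv.Perm (Fin n)) (hcoe : ∀ i, π'' i = resA π i) (j : Fin (n+2)) :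
    fA π'' j = π j := by
  by_cases h : (j : ℕ) < 2
  · by_cases hv : (j : ℕ) = 0
    · have hj : j = 0 := Fin.ext (by simpa using hv)
      rw [hj, fA]
      rw [dif_pos (by simp), h0]
      exact Fin.ext (by simp)
    · have hj : j = 1 := Fin.ext (by simp [Fin.val_one]; omega)
      rw [hj, fA]
      rw [dif_pos (by simp [Fin.val_one])]
      rw [pi_one π hinv h0]
      exact Fin.ext (by simp [Fin.val_one])
  · have hji : eA n ⟨(j : ℕ) - 2, by have := j.isLt; omega⟩ = j := by
      apply Fin.ext
      simp [eA]
      omega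
    rw [fA]
    rw [dif_neg h]
    apply Fin.ext
    show ((π'' ⟨(j : ℕ) - 2, by have := j.isLt; omega⟩ : Fin n) : ℕ) + 2 = (π j : ℕ)
    rw [hcoe]
    conv_rhs => rw [← hji, resA_comm π hinv h0]
    rfl

lemma resA_fA {n : ℕ} (π' : Equiv.Perm (Fin n)) (π'' : Equiv.Perm (Fin (n+2)))
    (hcoe : ∀ j, π'' j = fA π' j) (i : Fin n) : resA π'' i = π' i := by
  apply Fin.ext
  show min ((π'' (eA n i) : ℕ) - 2) (n-1) = π' i
  rw [hcoe, fA_comm]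
  have h1 := (π' i).isLt
  have := i.isLt
  show min (((π' i : ℕ) + 2) - 2) (n-1) = (π' i : ℕ)
  omega

lemma fB_eq {n : ℕ} (π : Equiv.Perm (Fin (n+2))) (hinv : ∀ i, π (π i) = i)
    (h0 : π 0 = ⟨n+1, by omega⟩) (π'' : Equiv.Perm (Fin n)) (hcoe : ∀ i, π'' i = resB π i)
    (j : Fin (n+2)) : fB π'' j = π j := by
  by_cases hv : (j : ℕ) = 0
  · have hj : j = 0 := Fin.ext (by simpa using hv)
    rw [hj, fB]
    rw [dif_pos (by simp), h0]
  · by_cases hv1 : (j : ℕ) = n+1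
    · have hj : j = ⟨n+1, by omega⟩ := Fin.ext (by simpa using hv1)
      rw [hj, fB_last, pi_last π hinv h0]
    · have hji : eB n ⟨(j : ℕ) - 1, by have := j.isLt; omega⟩ = j := by
        apply Fin.ext
        simp [eB]
        omega
      rw [fB]
      rw [dif_neg hv, dif_neg hv1]
      apply Fin.ext
      show ((π'' ⟨(j : ℕ) - 1, by have := j.isLt; omega⟩ : Fin n) : ℕ) + 1 = (π j : ℕ)
      rw [hcoe]
      conv_rhs => rw [← hji, resB_comm π hinv h0]
      rfl

lemma resB_fB {n : ℕ} (π' : Equiv.Perm (Fin n)) (π'' : Equiv.Perm (Fin (n+2)))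
    (hcoe : ∀ j, π'' j = fB π' j) (i : Fin n) : resB π'' i = π' i := by
  apply Fin.ext
  show min ((π'' (eB n i) : ℕ) - 1) (n-1) = π' i
  rw [hcoe, fB_comm]
  have h1 := (π' i).isLt
  have := i.isLt
  show min (((π' i : ℕ) + 1) - 1) (n-1) = (π' i : ℕ)
  omega

lemma cardA {n : ℕ} (hn : 1 ≤ n) :
    (Finset.univ.filter (fun π : Equiv.Perm (Fin (n+2)) =>
        ((∀ i, π i ≠ i ∧ π (π i) = i) ∧ ¬ contains21_3 (flat π)) ∧ π 0 = 1)).card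
    = (Finset.univ.filter (fun π : Equiv.Perm (Fin n) =>
        (∀ i, π i ≠ i ∧ π (π i) = i) ∧ ¬ contains21_3 (flat π))).card := by
  refine Finset.card_bij'
    (fun π hm => Function.Involutive.toPerm (resA π)
      (resA_invol π (fun i => ((Finset.mem_filter.mp hm).2.1.1 i).2)
        (Finset.mem_filter.mp hm).2.2))
    (fun π' hm' => Function.Involutive.toPerm (fA π')
      (fA_invol π' (fun i => ((Finset.mem_filter.mp hm').2.1 i).2)))
    ?_ ?_ ?_ ?_
  · intro π hm
    obtain ⟨-, ⟨hio, hnc⟩, h0⟩ := Finset.mem_filter.mp hm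
    have hinv : ∀ i, π (π i) = i := fun i => (hio i).2
    rw [Finset.mem_filter]
    have hio' : ∀ i : Fin n, resA π i ≠ i ∧ resA π (resA π i) = i :=
      fun i => ⟨resA_fpf π hinv h0 (fun i => (hio i).1) i, resA_invol π hinv h0 i⟩
    refine ⟨Finset.mem_univ _, fun i => hio' i, ?_⟩
    intro hcont
    apply hnc
    exact (avoidA_iff hn π _ hio hio' h0 (fun i => resA_comm π hinv h0 i)).mpr hcont
  · intro π' hm'
    obtain ⟨-, hio', hnc'⟩ := Finset.mem_filter.mp hm'
    have hinv' : ∀ i, π' (π' i) = i := fun i => (hio' i).2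
    rw [Finset.mem_filter]
    have hioP : ∀ j : Fin (n+2), fA π' j ≠ j ∧ fA π' (fA π' j) = j :=
      fun j => ⟨fA_fpf π' (fun i => (hio' i).1) j, fA_invol π' hinv' j⟩
    refine ⟨Finset.mem_univ _, ⟨fun j => hioP j, ?_⟩, fA_zero π'⟩
    intro hcont
    apply hnc'
    exact (avoidA_iff hn _ π' hioP hio' (fA_zero π') (fun i => fA_comm π' i)).mp hcont
  · intro π hm
    obtain ⟨-, ⟨hio, hnc⟩, h0⟩ := Finset.mem_filter.mp hm
    have hinv : ∀ i, π (π i) = i := fun i => (hio i).2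
    apply Equiv.ext
    intro j
    exact fA_eq π hinv h0 _ (fun i => rfl) j
  · intro π' hm'
    apply Equiv.ext
    intro i
    exact resA_fA π' _ (fun j => rfl) i

lemma cardB {n : ℕ} (hn : 1 ≤ n) :
    (Finset.univ.filter (fun π : Equiv.Perm (Fin (n+2)) =>
        ((∀ i, π i ≠ i ∧ π (π i) = i) ∧ ¬ contains21_3 (flat π)) ∧ π 0 = ⟨n+1, by omega⟩)).card
    = (Finset.univ.filter (fun π : Equiv.Perm (Fin n) =>
        (∀ i, π i ≠ i ∧ π (π i) = i) ∧ ¬ contains21_3 (flat π))).card := by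
  refine Finset.card_bij'
    (fun π hm => Function.Involutive.toPerm (resB π)
      (resB_invol π (fun i => ((Finset.mem_filter.mp hm).2.1.1 i).2)
        (Finset.mem_filter.mp hm).2.2))
    (fun π' hm' => Function.Involutive.toPerm (fB π')
      (fB_invol π' (fun i => ((Finset.mem_filter.mp hm').2.1 i).2)))
    ?_ ?_ ?_ ?_
  · intro π hm
    obtain ⟨-, ⟨hio, hnc⟩, h0⟩ := Finset.mem_filter.mp hm
    have hinv : ∀ i, π (π i) = i := fun i => (hio i).2
    rw [Finset.mem_filter]
    have hio' : ∀ i : Fin n, resB π i ≠ i ∧ resB π (resB π i) = i :=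
      fun i => ⟨resB_fpf π hinv h0 (fun i => (hio i).1) i, resB_invol π hinv h0 i⟩
    refine ⟨Finset.mem_univ _, fun i => hio' i, ?_⟩
    intro hcont
    apply hnc
    exact (avoidB_iff hn π _ hio hio' h0 (fun i => resB_comm π hinv h0 i)).mpr hcont
  · intro π' hm'
    obtain ⟨-, hio', hnc'⟩ := Finset.mem_filter.mp hm'
    have hinv' : ∀ i, π' (π' i) = i := fun i => (hio' i).2
    rw [Finset.mem_filter]
    have hioP : ∀ j : Fin (n+2), fB π' j ≠ j ∧ fB π' (fB π' j) = j :=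
      fun j => ⟨fB_fpf π' (fun i => (hio' i).1) j, fB_invol π' hinv' j⟩
    refine ⟨Finset.mem_univ _, ⟨fun j => hioP j, ?_⟩, fB_zero π'⟩
    intro hcont
    apply hnc'
    exact (avoidB_iff hn _ π' hioP hio' (fB_zero π') (fun i => fB_comm π' i)).mp hcont
  · intro π hm
    obtain ⟨-, ⟨hio, hnc⟩, h0⟩ := Finset.mem_filter.mp hm
    have hinv : ∀ i, π (π i) = i := fun i => (hio i).2
    apply Equiv.ext
    intro j
    exact fB_eq π hinv h0 _ (fun i => rfl) j
  · intro π' hm'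
    apply Equiv.ext
    intro i
    exact resB_fB π' _ (fun j => rfl) i

lemma split {n : ℕ} (hn : 1 ≤ n) :
    (Finset.univ.filter (fun π : Equiv.Perm (Fin (n+2)) =>
      (∀ i, π i ≠ i ∧ π (π i) = i) ∧ ¬ contains21_3 (flat π))).card
    = (Finset.univ.filter (fun π : Equiv.Perm (Fin (n+2)) =>
        ((∀ i, π i ≠ i ∧ π (π i) = i) ∧ ¬ contains21_3 (flat π)) ∧ π 0 = 1)).card
      + (Finset.univ.filter (fun π : Equiv.Perm (Fin (n+2)) =>
        ((∀ i, π i ≠ i ∧ π (π i) = i) ∧ ¬ contains21_3 (flat π)) ∧ π 0 = ⟨n+1, by omega⟩)).card := by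
  rw [← Finset.card_union_of_disjoint ?hd]
  case hd =>
    rw [Finset.disjoint_left]
    intro π hA hB
    have e1 := (Finset.mem_filter.mp hA).2.2
    have e2 := (Finset.mem_filter.mp hB).2.2
    rw [e1] at e2
    have := congrArg Fin.val e2
    simp [Fin.val_one] at this
    omega
  congr 1
  rw [← Finset.filter_or]
  apply Finset.filter_congr
  intro π _hm
  constructor
  · intro h
    by_cases h1 : π 0 = 1
    · exact Or.inl ⟨h, h1⟩
    by_cases h2 : π 0 = ⟨n+1, by omega⟩
    · exact Or.inr ⟨h, h2⟩
    · exact absurd (caseC hn π h.1 h1 h2) h.2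
  · rintro (⟨h, -⟩ | ⟨h, -⟩) <;> exact h

lemma base_case :
    (Finset.univ.filter (fun π : Equiv.Perm (Fin 2) =>
      (∀ i, π i ≠ i ∧ π (π i) = i) ∧ ¬ contains21_3 (flat π))).card = 1 := by
  rw [Finset.card_eq_one]
  refine ⟨Equiv.swap 0 1, ?_⟩
  ext π
  simp only [Finset.mem_filter, Finset.mem_univ, true_and, Finset.mem_singleton]
  constructor
  · rintro ⟨hio, -⟩
    have h0 : π 0 = 1 := by
      have hv := (π 0).isLt
      have hne : (π 0 : ℕ) ≠ 0 := fun h => (hio 0).1 (Fin.ext (by simpa using h))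
      exact Fin.ext (by simp [Fin.val_one]; omega)
    have h1 : π 1 = 0 := by
      have hv := (π 1).isLt
      have hne : (π 1 : ℕ) ≠ 1 := fun h => (hio 1).1 (Fin.ext (by simpa [Fin.val_one] using h))
      exact Fin.ext (by simp [Fin.val_one] at *; omega)
    apply Equiv.ext
    intro j
    have hj := j.isLt
    by_cases hv : (j : ℕ) = 0
    · have : j = 0 := Fin.ext (by simpa using hv)
      rw [this, h0, Equiv.swap_apply_left]
    · have : j = 1 := Fin.ext (by simp [Fin.val_one]; omega)
      rw [this, h1, Equiv.swap_apply_right]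
  · rintro rfl
    refine ⟨by decide, ?_⟩
    apply not_contains_short
    rw [flat, dif_pos (by norm_num), coe_list_eq, List.map_map, List.length_map]
    exact flat_length_aux _ _ _ _

theorem stmt_7 (m : ℕ) (hm : 1 ≤ m) :
    (Finset.univ.filter
        (fun π : Equiv.Perm (Fin (2 * m)) =>
          (∀ i, π i ≠ i ∧ π (π i) = i) ∧ ¬ contains21_3 (flat π))).card
      = 2 ^ (m - 1) := by
  induction m, hm using Nat.le_induction with
  | base => exact base_case
  | succ m hm ih =>
    have h : (Finset.univ.filter
        (fun π : Equiv.Perm (Fin (2 * m + 2)) =>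
          (∀ i, π i ≠ i ∧ π (π i) = i) ∧ ¬ contains21_3 (flat π))).card
        = (Finset.univ.filter (fun π : Equiv.Perm (Fin (2 * m + 2)) =>
            ((∀ i, π i ≠ i ∧ π (π i) = i) ∧ ¬ contains21_3 (flat π)) ∧ π 0 = 1)).card
          + (Finset.univ.filter (fun π : Equiv.Perm (Fin (2 * m + 2)) =>
            ((∀ i, π i ≠ i ∧ π (π i) = i) ∧ ¬ contains21_3 (flat π)) ∧ π 0
              = ⟨2 * m + 1, by omega⟩)).card := split (by omega)
    rw [cardA (by omega), cardB (by omega), ih] at h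
    have h2 : 2 ^ (m - 1) + 2 ^ (m - 1) = 2 ^ (m + 1 - 1) := by
      rw [show m + 1 - 1 = (m - 1) + 1 from by omega, pow_succ]
      ring
    exact h.trans h2
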